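/- Continuity of the Nemytskii map: under the same growth assumptions on the Carathéodory function f (|f(x, s, ξ)| ≤ C(|k(x)| + |s|^{q(x)−1} + Σ_{i=1}^n |ξ_i|^{r_i(x)}) with q ∈ C(Ω̄), 1 < q⁻, q(x) ≤ p_M(x), ∫_Ω |k|^{q'(x)} dx < ∞, 1 < r_i(x) q'(x) ≤ p_i(x)), let u_k, u : Ω → ℝ and g_k, g : Ω → ℝ^n be measurable with finite modulars ∫_Ω |u_k|^{p_M(x)} dx, ∫_Ω |(g_k)_i|^{p_i(x)} dx < ∞, and suppose ∫_Ω |u_k − u|^{p_M(x)} dx → 0 and ∫_Ω |(g_k)_i − g_i|^{p_i(x)} dx → 0 for each i as k → ∞. Then ∫_Ω |f(x, u_k(x), g_k(x)) − f(x, u(x), g(x))|^{q'(x)} dx → 0 as k → ∞. -/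

import Mathlib

/-!
Fix a subsequence. Since the modular distances `∫ |u_k - u|^{p_M} + ∑ᵢ ∫ |(g_k)ᵢ - gᵢ|^{pᵢ}`
tend to `0`, a further subsequence has summable modular distances; the sum of the series of
their integrands is an integrable function `G`, and it dominates each integrand and forces them
to tend to `0` almost everywhere, hence `u_k → u` and `g_k → g` a.e. along this subsequence.
The exponents are bounded on the compact set `closure Ω`, so the growth condition, together with
`(|s|^{q-1})^{q'} = |s|^q ≤ 1 + |s|^{p_M}` and `(|ξᵢ|^{rᵢ})^{q'} ≤ 1 + |ξᵢ|^{pᵢ}`, bounds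
`|f(x, u_k, g_k) - f(x, u, g)|^{q'}` by a constant multiple of
`1 + |k|^{q'} + |u|^{p_M} + ∑ᵢ |gᵢ|^{pᵢ} + G`, which is integrable. Carathéodory continuity gives
pointwise convergence, so dominated convergence applies along the subsequence; as every
subsequence has such a further subsequence, the whole sequence converges.
-/

open MeasureTheory Filter Topology
open scoped ENNReal

namespace Real

lemma rpow_le_one_add_rpow {t a b : ℝ} (ht : 0 ≤ t) (ha : 0 ≤ a) (hab : a ≤ b) :
    t ^ a ≤ 1 + t ^ b := by
  rcases le_total t 1 with h | h
  · linarith [rpow_le_one ht h ha, rpow_nonneg ht b]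
  · linarith [rpow_le_rpow_of_exponent_le h hab]

lemma abs_add_rpow_le {x y e E : ℝ} (he : 1 ≤ e) (heE : e ≤ E) :
    |x + y| ^ e ≤ 2 ^ E * (|x| ^ e + |y| ^ e) := by
  have h : (|x| + |y|) ^ e ≤ 2 ^ (e - 1) * (|x| ^ e + |y| ^ e) := by
    exact_mod_cast NNReal.rpow_add_le_mul_rpow_add_rpow ⟨|x|, abs_nonneg x⟩ ⟨|y|, abs_nonneg y⟩ he
  calc |x + y| ^ e ≤ (|x| + |y|) ^ e := rpow_le_rpow (abs_nonneg _) (abs_add_le x y) (by linarith)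
    _ ≤ 2 ^ (e - 1) * (|x| ^ e + |y| ^ e) := h
    _ ≤ 2 ^ E * (|x| ^ e + |y| ^ e) := by
      gcongr
      · exact one_le_two
      · linarith

lemma tendsto_of_abs_sub_rpow_tendsto_zero {β : Type*} {l : Filter β} {a : β → ℝ} {b e : ℝ}
    (he : 0 < e) (h : Tendsto (fun j => |a j - b| ^ e) l (𝓝 0)) : Tendsto a l (𝓝 b) := by
  rw [tendsto_iff_norm_sub_tendsto_zero]
  have h' := (continuousAt_rpow_const 0 e⁻¹ (Or.inr (inv_pos.2 he).le)).tendsto.comp h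
  simpa [Function.comp_def, rpow_rpow_inv (abs_nonneg _) he.ne',
    zero_rpow (inv_ne_zero he.ne')] using h'

end Real

open Real

section Modular

variable {ι : Type*} [Fintype ι]

/-- The integrand of the anisotropic modular `∫ |u|^{p_M} + ∑ᵢ |gᵢ|^{pᵢ}` at a point `x`, with
`s = u(x)`, `ξ = g(x)`, `e = p_M(x)` and `p i = pᵢ(x)`. -/
noncomputable def modularIntegrand (e : ℝ) (p : ι → ℝ) (s : ℝ) (ξ : ι → ℝ) : ℝ :=
  |s| ^ e + ∑ i, |ξ i| ^ p i

variable {e E : ℝ} {p : ι → ℝ}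

lemma abs_rpow_le_modularIntegrand (s : ℝ) (ξ : ι → ℝ) : |s| ^ e ≤ modularIntegrand e p s ξ :=
  le_add_of_nonneg_right (Finset.sum_nonneg fun _ _ => rpow_nonneg (abs_nonneg _) _)

lemma abs_apply_rpow_le_modularIntegrand (s : ℝ) (ξ : ι → ℝ) (i : ι) :
    |ξ i| ^ p i ≤ modularIntegrand e p s ξ :=
  (Finset.single_le_sum (f := fun i => |ξ i| ^ p i) (fun _ _ => rpow_nonneg (abs_nonneg _) _)
    (Finset.mem_univ i)).trans (le_add_of_nonneg_left (rpow_nonneg (abs_nonneg _) _))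

lemma modularIntegrand_nonneg (s : ℝ) (ξ : ι → ℝ) : 0 ≤ modularIntegrand e p s ξ :=
  (rpow_nonneg (abs_nonneg s) e).trans (abs_rpow_le_modularIntegrand s ξ)

lemma modularIntegrand_add_le (he : 1 ≤ e) (heE : e ≤ E) (hp : ∀ i, 1 ≤ p i ∧ p i ≤ E)
    (s t : ℝ) (ξ η : ι → ℝ) :
    modularIntegrand e p (s + t) (ξ + η) ≤
      2 ^ E * (modularIntegrand e p s ξ + modularIntegrand e p t η) := by
  have hξ : ∑ i, |(ξ + η) i| ^ p i ≤ ∑ i, 2 ^ E * (|ξ i| ^ p i + |η i| ^ p i) :=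
    Finset.sum_le_sum fun i _ => abs_add_rpow_le (hp i).1 (hp i).2
  have hs := abs_add_rpow_le (x := s) (y := t) he heE
  simp only [modularIntegrand, ← Finset.mul_sum, Finset.sum_add_distrib] at hξ ⊢
  linarith

lemma tendsto_of_modularIntegrand_sub_tendsto_zero {β : Type*} {l : Filter β}
    (he : 0 < e) (hp : ∀ i, 0 < p i) {s : β → ℝ} {ξ : β → ι → ℝ} {s₀ : ℝ} {ξ₀ : ι → ℝ}
    (h : Tendsto (fun j => modularIntegrand e p (s j - s₀) (ξ j - ξ₀)) l (𝓝 0)) :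
    Tendsto s l (𝓝 s₀) ∧ Tendsto ξ l (𝓝 ξ₀) :=
  ⟨tendsto_of_abs_sub_rpow_tendsto_zero he <| squeeze_zero
      (fun _ => rpow_nonneg (abs_nonneg _) _) (fun _ => abs_rpow_le_modularIntegrand _ _) h,
    tendsto_pi_nhds.2 fun i => tendsto_of_abs_sub_rpow_tendsto_zero (hp i) <| squeeze_zero
      (fun _ => rpow_nonneg (abs_nonneg _) _)
      (fun j => abs_apply_rpow_le_modularIntegrand (s j - s₀) (ξ j - ξ₀) i) h⟩

lemma tendsto_abs_sub_rpow_of_modularIntegrand_sub {β : Type*} {l : Filter β}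
    {f : ℝ × (ι → ℝ) → ℝ} (hf : Continuous f) {q' : ℝ} (hq' : 0 < q') (he : 0 < e)
    (hp : ∀ i, 0 < p i) {s : β → ℝ} {ξ : β → ι → ℝ} {s₀ : ℝ} {ξ₀ : ι → ℝ}
    (h : Tendsto (fun j => modularIntegrand e p (s j - s₀) (ξ j - ξ₀)) l (𝓝 0)) :
    Tendsto (fun j => |f (s j, ξ j) - f (s₀, ξ₀)| ^ q') l (𝓝 0) := by
  obtain ⟨hs, hξ⟩ := tendsto_of_modularIntegrand_sub_tendsto_zero he hp h
  have hf' := tendsto_iff_norm_sub_tendsto_zero.1 ((hf.tendsto _).comp (hs.prodMk_nhds hξ))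
  simpa [zero_rpow hq'.ne'] using hf'.rpow_const (p := q') (Or.inr hq'.le)

section Growth

variable {C k q q' pM : ℝ} {r : ι → ℝ}

lemma abs_rpow_le_of_growth (hC : 0 ≤ C) (hqq' : q.HolderConjugate q') (hq'E : q' ≤ E)
    (hqpM : q ≤ pM) (hr : ∀ i, 0 ≤ r i * q' ∧ r i * q' ≤ p i) {F s : ℝ} {ξ : ι → ℝ}
    (hF : |F| ≤ C * (|k| + |s| ^ (q - 1) + ∑ i, |ξ i| ^ r i)) :
    |F| ^ q' ≤
      max 1 (C * (Fintype.card ι + 2)) ^ E * (1 + |k| ^ q' + modularIntegrand pM p s ξ) := by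
  set Φ := 1 + |k| ^ q' + modularIntegrand pM p s ξ with hΦ_def
  have hq'0 : 0 < q' := hqq'.symm.pos
  have hΦ : 1 + modularIntegrand pM p s ξ ≤ Φ := by
    linarith [rpow_nonneg (abs_nonneg k) q']
  have hΦ0 : 0 ≤ Φ := by linarith [modularIntegrand_nonneg (e := pM) (p := p) s ξ]
  -- each of the `card ι + 2` terms of the growth bound is at most `Φ ^ q'⁻¹`
  have le_root : ∀ t, 0 ≤ t → t ^ q' ≤ Φ → t ≤ Φ ^ q'⁻¹ := fun t ht h =>
    (le_rpow_inv_iff_of_pos ht hΦ0 hq'0).2 h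
  have hk : |k| ≤ Φ ^ q'⁻¹ :=
    le_root _ (abs_nonneg k) (by linarith [modularIntegrand_nonneg (e := pM) (p := p) s ξ])
  have hs : |s| ^ (q - 1) ≤ Φ ^ q'⁻¹ := by
    refine le_root _ (rpow_nonneg (abs_nonneg s) _) ?_
    rw [← rpow_mul (abs_nonneg s), hqq'.sub_one_mul_conj]
    calc |s| ^ q ≤ 1 + |s| ^ pM := rpow_le_one_add_rpow (abs_nonneg s) hqq'.nonneg hqpM
      _ ≤ Φ := hΦ.trans' (by linarith [abs_rpow_le_modularIntegrand (e := pM) (p := p) s ξ])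
  have hξ : ∀ i, |ξ i| ^ r i ≤ Φ ^ q'⁻¹ := fun i => by
    refine le_root _ (rpow_nonneg (abs_nonneg _) _) ?_
    rw [← rpow_mul (abs_nonneg _)]
    calc |ξ i| ^ (r i * q') ≤ 1 + |ξ i| ^ p i :=
          rpow_le_one_add_rpow (abs_nonneg _) (hr i).1 (hr i).2
      _ ≤ Φ := hΦ.trans' (by linarith [abs_apply_rpow_le_modularIntegrand (e := pM) (p := p) s ξ i])
  have hT : |k| + |s| ^ (q - 1) + ∑ i, |ξ i| ^ r i ≤ (Fintype.card ι + 2) * Φ ^ q'⁻¹ := by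
    have := Finset.sum_le_sum fun i (_ : i ∈ Finset.univ) => hξ i
    simp only [Finset.sum_const, Finset.card_univ, nsmul_eq_mul] at this
    linarith
  calc |F| ^ q' ≤ (C * (Fintype.card ι + 2) * Φ ^ q'⁻¹) ^ q' := by
        refine rpow_le_rpow (abs_nonneg F) (hF.trans ?_) hq'0.le
        rw [mul_assoc]
        exact mul_le_mul_of_nonneg_left hT hC
    _ = (C * (Fintype.card ι + 2)) ^ q' * Φ := by
        rw [mul_rpow (by positivity) (rpow_nonneg hΦ0 _), rpow_inv_rpow hΦ0 hq'0.ne']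
    _ ≤ max 1 (C * (Fintype.card ι + 2)) ^ E * Φ := by
        gcongr
        exact (rpow_le_rpow (by positivity) (le_max_right _ _) hq'0.le).trans
          (rpow_le_rpow_of_exponent_le (le_max_left _ _) hq'E)

lemma abs_sub_rpow_le_of_growth (hC : 0 ≤ C) (hqq' : q.HolderConjugate q') (hq'E : q' ≤ E)
    (hqpM : q ≤ pM) (hpME : pM ≤ E) (hp : ∀ i, 1 ≤ p i ∧ p i ≤ E)
    (hr : ∀ i, 0 ≤ r i * q' ∧ r i * q' ≤ p i) {F₁ F₀ s₁ s₀ : ℝ} {ξ₁ ξ₀ : ι → ℝ}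
    (hF₁ : |F₁| ≤ C * (|k| + |s₁| ^ (q - 1) + ∑ i, |ξ₁ i| ^ r i))
    (hF₀ : |F₀| ≤ C * (|k| + |s₀| ^ (q - 1) + ∑ i, |ξ₀ i| ^ r i)) :
    |F₁ - F₀| ^ q' ≤ 2 ^ E * max 1 (C * (Fintype.card ι + 2)) ^ E * (2 ^ E + 1) *
      (1 + |k| ^ q' + modularIntegrand pM p s₀ ξ₀ +
        modularIntegrand pM p (s₁ - s₀) (ξ₁ - ξ₀)) := by
  set A := max 1 (C * (Fintype.card ι + 2)) ^ E
  set Ψ := 1 + |k| ^ q' + modularIntegrand pM p s₀ ξ₀ +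
    modularIntegrand pM p (s₁ - s₀) (ξ₁ - ξ₀) with hΨ_def
  have hq'1 : 1 ≤ q' := hqq'.symm.lt.le
  have h2E : 1 ≤ (2 : ℝ) ^ E := one_le_rpow one_le_two (by linarith)
  have hA : 0 ≤ A := rpow_nonneg (zero_le_one.trans (le_max_left _ _)) E
  have hk0 : 0 ≤ |k| ^ q' := rpow_nonneg (abs_nonneg k) q'
  have hρD := modularIntegrand_nonneg (e := pM) (p := p) (s₁ - s₀) (ξ₁ - ξ₀)
  have hρ₁ : modularIntegrand pM p s₁ ξ₁ ≤ 2 ^ E *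
      (modularIntegrand pM p s₀ ξ₀ + modularIntegrand pM p (s₁ - s₀) (ξ₁ - ξ₀)) := by
    simpa using modularIntegrand_add_le (hqq'.lt.le.trans hqpM) hpME hp s₀ (s₁ - s₀) ξ₀ (ξ₁ - ξ₀)
  have hΦ₁ : 1 + |k| ^ q' + modularIntegrand pM p s₁ ξ₁ ≤ 2 ^ E * Ψ := by
    nlinarith [mul_le_mul_of_nonneg_right h2E (by linarith : (0 : ℝ) ≤ 1 + |k| ^ q')]
  have hΦ₀ : 1 + |k| ^ q' + modularIntegrand pM p s₀ ξ₀ ≤ Ψ := by linarith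
  calc |F₁ - F₀| ^ q' = |F₁ + -F₀| ^ q' := by rw [sub_eq_add_neg]
    _ ≤ 2 ^ E * (|F₁| ^ q' + |F₀| ^ q') := by
        simpa only [abs_neg] using abs_add_rpow_le (x := F₁) (y := -F₀) hq'1 hq'E
    _ ≤ 2 ^ E * (A * (2 ^ E * Ψ) + A * Ψ) := by
        gcongr
        · exact (abs_rpow_le_of_growth hC hqq' hq'E hqpM hr hF₁).trans
            (mul_le_mul_of_nonneg_left hΦ₁ hA)
        · exact (abs_rpow_le_of_growth hC hqq' hq'E hqpM hr hF₀).trans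
            (mul_le_mul_of_nonneg_left hΦ₀ hA)
    _ = 2 ^ E * A * (2 ^ E + 1) * Ψ := by ring

end Growth

end Modular

theorem IsCompact.exists_forall_le_of_continuousOn {X ι : Type*} [TopologicalSpace X] [Finite ι]
    {K : Set X} (hK : IsCompact K) {f : ι → X → ℝ} (hf : ∀ i, ContinuousOn (f i) K) :
    ∃ E, ∀ i, ∀ x ∈ K, f i x ≤ E := by
  choose B hB using fun i => hK.bddAbove_image (hf i)
  obtain ⟨E, hE⟩ := (Set.finite_range B).bddAbove
  exact ⟨E, fun i x hx => (hB i (Set.mem_image_of_mem _ hx)).trans (hE (Set.mem_range_self i))⟩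

namespace MeasureTheory

variable {α : Type*} [MeasurableSpace α] {μ : Measure α}

theorem aemeasurable_caratheodory_comp {β : Type*} [TopologicalSpace β]
    [TopologicalSpace.MetrizableSpace β] [MeasurableSpace β] [SecondCountableTopology β]
    [OpensMeasurableSpace β] {f : α → β → ℝ} (hf_meas : ∀ y, Measurable (f · y))
    (hf_cont : ∀ᵐ x ∂μ, Continuous (f x)) {v : α → β} (hv : Measurable v) :
    AEMeasurable (fun x => f x (v x)) μ := by
  set N := toMeasurable μ {x | ¬Continuous (f x)}
  have hN : ∀ᵐ x ∂μ, x ∉ N := measure_eq_zero_iff_ae_notMem.1 (by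
    rw [measure_toMeasurable]; exact ae_iff.1 hf_cont)
  -- replacing `f` by `0` on the null set `N` makes it continuous in `y` for every `x`
  set F : β → α → ℝ := fun y => Nᶜ.indicator (f · y)
  have hF : Measurable (Function.uncurry F) := by
    refine measurable_uncurry_of_continuous_of_measurable (fun x => ?_)
      fun y => (hf_meas y).indicator (measurableSet_toMeasurable _ _).compl
    by_cases hx : x ∈ N
    · simpa [F, hx] using continuous_const
    · simpa [F, hx] using not_not.1 fun h => hx (subset_toMeasurable _ _ h)
  refine ⟨fun x => F (v x) x, hF.comp (hv.prodMk measurable_id), ?_⟩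
  filter_upwards [hN] with x hx
  simp [F, hx]

theorem Integrable.abs_sub_rpow {a b e : α → ℝ} {E : ℝ} (ha : AEMeasurable a μ)
    (hb : AEMeasurable b μ) (he : AEMeasurable e μ) (heE : ∀ᵐ x ∂μ, 1 ≤ e x ∧ e x ≤ E)
    (hia : Integrable (fun x => |a x| ^ e x) μ) (hib : Integrable (fun x => |b x| ^ e x) μ) :
    Integrable (fun x => |a x - b x| ^ e x) μ := by
  refine ((hia.add hib).const_mul (2 ^ E)).mono'
    ((continuous_abs.measurable.comp_aemeasurable (ha.sub hb)).pow he).aestronglyMeasurable ?_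
  filter_upwards [heE] with x hx
  rw [Real.norm_of_nonneg (rpow_nonneg (abs_nonneg _) _)]
  simpa only [Pi.add_apply, abs_neg, ← sub_eq_add_neg] using
    abs_add_rpow_le (x := a x) (y := -b x) hx.1 hx.2

theorem exists_subseq_ae_le_and_ae_tendsto_zero {h : ℕ → α → ℝ} (h_nonneg : ∀ j, 0 ≤ᵐ[μ] h j)
    (h_int : ∀ j, Integrable (h j) μ) (h_lim : Tendsto (fun j => ∫ x, h j x ∂μ) atTop (𝓝 0)) :
    ∃ φ : ℕ → ℕ, StrictMono φ ∧ ∃ G : α → ℝ, Integrable G μ ∧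
      (∀ j, ∀ᵐ x ∂μ, h (φ j) x ≤ G x) ∧ ∀ᵐ x ∂μ, Tendsto (fun j => h (φ j) x) atTop (𝓝 0) := by
  obtain ⟨φ, hφ_mono, hφ⟩ := extraction_forall_of_eventually fun m =>
    h_lim.eventually (ge_mem_nhds (show (0 : ℝ) < (1 / 2) ^ m by positivity))
  set S : α → ℝ≥0∞ := fun x => ∑' j, ENNReal.ofReal (h (φ j) x)
  have hS_meas : AEMeasurable S μ :=
    AEMeasurable.tsum fun j => (h_int _).aemeasurable.ennreal_ofReal
  have hS_lint : ∫⁻ x, S x ∂μ ≠ ∞ := by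
    rw [lintegral_tsum fun j => (h_int _).aemeasurable.ennreal_ofReal]
    refine ne_top_of_le_ne_top (ENNReal.ofReal_ne_top (r := ∑' j : ℕ, (1 / 2 : ℝ) ^ j)) ?_
    rw [ENNReal.ofReal_tsum_of_nonneg (fun j => by positivity)
      (summable_geometric_of_lt_one (by norm_num) (by norm_num))]
    refine ENNReal.tsum_le_tsum fun j => ?_
    rw [← ofReal_integral_eq_lintegral_ofReal (h_int _) (h_nonneg _)]
    exact ENNReal.ofReal_le_ofReal (hφ j)
  have hS_fin : ∀ᵐ x ∂μ, S x < ∞ := ae_lt_top' hS_meas hS_lint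
  refine ⟨φ, hφ_mono, fun x => (S x).toReal,
    integrable_toReal_of_lintegral_ne_top hS_meas hS_lint, fun j => ?_, ?_⟩
  · filter_upwards [hS_fin, h_nonneg (φ j)] with x hx h0
    rw [← ENNReal.toReal_ofReal h0]
    exact ENNReal.toReal_mono hx.ne (ENNReal.le_tsum j)
  · filter_upwards [hS_fin, ae_all_iff.2 fun j => h_nonneg (φ j)] with x hx h0
    have := (ENNReal.tendsto_toReal ENNReal.zero_ne_top).comp
      (ENNReal.tendsto_atTop_zero_of_tsum_ne_top hx.ne)
    simpa [Function.comp_def, ENNReal.toReal_ofReal (h0 _)] using this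

theorem tendsto_integral_of_dominated_of_tendsto_integral_zero {F D : ℕ → α → ℝ} {Φ : α → ℝ}
    {K : ℝ} (hK : 0 ≤ K) (hF : ∀ j, AEStronglyMeasurable (F j) μ) (hΦ : Integrable Φ μ)
    (hD_nonneg : ∀ j, 0 ≤ᵐ[μ] D j) (hD_int : ∀ j, Integrable (D j) μ)
    (hD : Tendsto (fun j => ∫ x, D j x ∂μ) atTop (𝓝 0))
    (h_bound : ∀ j, ∀ᵐ x ∂μ, ‖F j x‖ ≤ K * (Φ x + D j x))
    (h_lim : ∀ᵐ x ∂μ, ∀ φ : ℕ → ℕ, Tendsto (fun j => D (φ j) x) atTop (𝓝 0) →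
      Tendsto (fun j => F (φ j) x) atTop (𝓝 0)) :
    Tendsto (fun j => ∫ x, F j x ∂μ) atTop (𝓝 0) := by
  refine tendsto_of_subseq_tendsto fun ns hns => ?_
  obtain ⟨φ, -, G, hG, hDG, hD0⟩ := exists_subseq_ae_le_and_ae_tendsto_zero
    (fun j => hD_nonneg (ns j)) (fun j => hD_int (ns j)) (hD.comp hns)
  refine ⟨φ, ?_⟩
  simpa only [integral_zero] using tendsto_integral_of_dominated_convergence (f := fun _ => 0)
    (fun x => K * (Φ x + G x)) (fun j => hF _) ((hΦ.add hG).const_mul K)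
    (fun j => by
      filter_upwards [h_bound (ns (φ j)), hDG j] with x h1 h2
      exact h1.trans (by gcongr))
    (by
      filter_upwards [h_lim, hD0] with x hx h
      exact hx (ns ∘ φ) h)

variable {ι : Type*} [Fintype ι] {e : α → ℝ} {p : ι → α → ℝ}

theorem integrable_modularIntegrand {a : α → ℝ} {b : α → ι → ℝ}
    (ha : Integrable (fun x => |a x| ^ e x) μ)
    (hb : ∀ i, Integrable (fun x => |b x i| ^ p i x) μ) :
    Integrable (fun x => modularIntegrand (e x) (p · x) (a x) (b x)) μ :=
  ha.add (integrable_finsetSum _ fun i _ => hb i)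

theorem tendsto_integral_modularIntegrand {a : ℕ → α → ℝ} {b : ℕ → α → ι → ℝ}
    (ha : ∀ j, Integrable (fun x => |a j x| ^ e x) μ)
    (hb : ∀ j i, Integrable (fun x => |b j x i| ^ p i x) μ)
    (ha₀ : Tendsto (fun j => ∫ x, |a j x| ^ e x ∂μ) atTop (𝓝 0))
    (hb₀ : ∀ i, Tendsto (fun j => ∫ x, |b j x i| ^ p i x ∂μ) atTop (𝓝 0)) :
    Tendsto (fun j => ∫ x, modularIntegrand (e x) (p · x) (a j x) (b j x) ∂μ) atTop (𝓝 0) := by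
  have h := ha₀.add (tendsto_finsetSum Finset.univ fun i _ => hb₀ i)
  rw [zero_add, Finset.sum_const_zero] at h
  refine h.congr fun j => ?_
  rw [← integral_finsetSum _ fun i _ => hb j i,
    ← integral_add (ha j) (integrable_finsetSum _ fun i _ => hb j i)]
  rfl

theorem tendsto_integral_nemytskii [IsFiniteMeasure μ] {f : α → ℝ × (ι → ℝ) → ℝ}
    (hf_meas : ∀ y, Measurable (f · y)) (hf_cont : ∀ᵐ x ∂μ, Continuous (f x))
    {C E : ℝ} (hC : 0 ≤ C) {q q' pM k : α → ℝ} {r : ι → α → ℝ}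
    (hq'_meas : AEMeasurable q' μ) (hpM_meas : AEMeasurable pM μ)
    (hp_meas : ∀ i, AEMeasurable (p i) μ) (hqq' : ∀ᵐ x ∂μ, (q x).HolderConjugate (q' x))
    (hq'E : ∀ᵐ x ∂μ, q' x ≤ E) (hqpM : ∀ᵐ x ∂μ, q x ≤ pM x) (hpME : ∀ᵐ x ∂μ, pM x ≤ E)
    (hpE : ∀ᵐ x ∂μ, ∀ i, 1 ≤ p i x ∧ p i x ≤ E)
    (hr : ∀ᵐ x ∂μ, ∀ i, 0 ≤ r i x * q' x ∧ r i x * q' x ≤ p i x)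
    (hk : Integrable (fun x => |k x| ^ q' x) μ)
    (hf_growth : ∀ᵐ x ∂μ, ∀ (s : ℝ) (ξ : ι → ℝ),
      |f x (s, ξ)| ≤ C * (|k x| + |s| ^ (q x - 1) + ∑ i, |ξ i| ^ r i x))
    {u : ℕ → α → ℝ} {u₀ : α → ℝ} {g : ℕ → α → ι → ℝ} {g₀ : α → ι → ℝ}
    (hu : ∀ j, Measurable (u j)) (hu₀ : Measurable u₀)
    (hg : ∀ j, Measurable (g j)) (hg₀ : Measurable g₀)
    (hu_int : ∀ j, Integrable (fun x => |u j x| ^ pM x) μ)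
    (hu₀_int : Integrable (fun x => |u₀ x| ^ pM x) μ)
    (hg_int : ∀ j i, Integrable (fun x => |g j x i| ^ p i x) μ)
    (hg₀_int : ∀ i, Integrable (fun x => |g₀ x i| ^ p i x) μ)
    (hu_lim : Tendsto (fun j => ∫ x, |u j x - u₀ x| ^ pM x ∂μ) atTop (𝓝 0))
    (hg_lim : ∀ i, Tendsto (fun j => ∫ x, |g j x i - g₀ x i| ^ p i x ∂μ) atTop (𝓝 0)) :
    Tendsto (fun j => ∫ x, |f x (u j x, g j x) - f x (u₀ x, g₀ x)| ^ q' x ∂μ) atTop (𝓝 0) := by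
  have hu_sub : ∀ j, Integrable (fun x => |u j x - u₀ x| ^ pM x) μ := fun j =>
    Integrable.abs_sub_rpow (hu j).aemeasurable hu₀.aemeasurable hpM_meas
      (by filter_upwards [hqq', hqpM, hpME] with x h₁ h₂ h₃ using ⟨h₁.lt.le.trans h₂, h₃⟩)
      (hu_int j) hu₀_int
  have hg_sub : ∀ j i, Integrable (fun x => |g j x i - g₀ x i| ^ p i x) μ := fun j i =>
    Integrable.abs_sub_rpow ((measurable_pi_apply i).comp (hg j)).aemeasurable
      ((measurable_pi_apply i).comp hg₀).aemeasurable (hp_meas i)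
      (by filter_upwards [hpE] with x hx using hx i) (hg_int j i) (hg₀_int i)
  refine tendsto_integral_of_dominated_of_tendsto_integral_zero
    (K := 2 ^ E * max 1 (C * (Fintype.card ι + 2)) ^ E * (2 ^ E + 1))
    (D := fun j x => modularIntegrand (pM x) (p · x) (u j x - u₀ x) (g j x - g₀ x))
    (Φ := fun x => 1 + |k x| ^ q' x + modularIntegrand (pM x) (p · x) (u₀ x) (g₀ x))
    (by positivity) (fun j => ?_)
    (((integrable_const 1).add hk).add (integrable_modularIntegrand hu₀_int hg₀_int))
    (fun j => ae_of_all _ fun x => modularIntegrand_nonneg _ _)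
    (fun j => integrable_modularIntegrand (hu_sub j) (hg_sub j))
    (tendsto_integral_modularIntegrand hu_sub hg_sub hu_lim hg_lim) (fun j => ?_) ?_
  · have hf_comp := fun {v} (hv : Measurable v) => aemeasurable_caratheodory_comp hf_meas hf_cont hv
    exact ((continuous_abs.measurable.comp_aemeasurable ((hf_comp ((hu j).prodMk (hg j))).sub
      (hf_comp (hu₀.prodMk hg₀)))).pow hq'_meas).aestronglyMeasurable
  · filter_upwards [hqq', hq'E, hqpM, hpME, hpE, hr, hf_growth] with x h₁ h₂ h₃ h₄ h₅ h₆ h₇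
    rw [Real.norm_of_nonneg (rpow_nonneg (abs_nonneg _) _)]
    exact abs_sub_rpow_le_of_growth hC h₁ h₂ h₃ h₄ h₅ h₆ (h₇ _ _) (h₇ _ _)
  · filter_upwards [hf_cont, hqq', hqpM, hpE] with x hfx h₁ h₂ h₃ φ hφ
    exact tendsto_abs_sub_rpow_of_modularIntegrand_sub hfx h₁.symm.pos
      (h₁.pos.trans_le h₂) (fun i => zero_lt_one.trans_le (h₃ i).1) hφ

end MeasureTheory

theorem nemytskii_continuous_general
    {n : ℕ} (Ω : Set (Fin n → ℝ)) (hΩo : IsOpen Ω)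
    (hΩb : Bornology.IsBounded Ω)
    (p : Fin n → (Fin n → ℝ) → ℝ)
    (hpc : ∀ i, ContinuousOn (p i) (closure Ω))
    (hp1 : ∀ i, ∀ x ∈ closure Ω, 1 < p i x)
    (pM : (Fin n → ℝ) → ℝ) (hpM : ∀ x, pM x = ⨆ i, p i x)
    (f : (Fin n → ℝ) → ℝ → (Fin n → ℝ) → ℝ)
    (hfmeas : ∀ (s : ℝ) (ξ : Fin n → ℝ), Measurable (fun x => f x s ξ))
    (hfcont : ∀ᵐ x ∂(volume.restrict Ω),
      Continuous (fun sξ : ℝ × (Fin n → ℝ) => f x sξ.1 sξ.2))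
    (C : ℝ) (hC : 0 < C)
    (q : (Fin n → ℝ) → ℝ) (hqc : ContinuousOn q (closure Ω))
    (hq1 : ∀ x ∈ closure Ω, 1 < q x)
    (hqpM : ∀ x ∈ Ω, q x ≤ pM x)
    (q' : (Fin n → ℝ) → ℝ) (hq' : ∀ x, q' x = q x / (q x - 1))
    (k : (Fin n → ℝ) → ℝ)
    (hkint : IntegrableOn (fun x => |k x| ^ q' x) Ω)
    (r : Fin n → (Fin n → ℝ) → ℝ)
    (hr : ∀ i, ∀ x ∈ Ω, 1 < r i x * q' x ∧ r i x * q' x ≤ p i x)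
    (hgrowth : ∀ᵐ x ∂(volume.restrict Ω), ∀ (s : ℝ) (ξ : Fin n → ℝ),
      |f x s ξ| ≤ C * (|k x| + |s| ^ (q x - 1) + ∑ i, |ξ i| ^ r i x))
    (u : ℕ → (Fin n → ℝ) → ℝ) (ulim : (Fin n → ℝ) → ℝ)
    (hum : ∀ j, Measurable (u j)) (hulm : Measurable ulim)
    (huint : ∀ j, IntegrableOn (fun x => |u j x| ^ pM x) Ω)
    (hulint : IntegrableOn (fun x => |ulim x| ^ pM x) Ω)
    (g : ℕ → (Fin n → ℝ) → Fin n → ℝ) (glim : (Fin n → ℝ) → Fin n → ℝ)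
    (hgm : ∀ j i, Measurable (fun x => g j x i)) (hglm : ∀ i, Measurable (fun x => glim x i))
    (hgint : ∀ j i, IntegrableOn (fun x => |g j x i| ^ p i x) Ω)
    (hglint : ∀ i, IntegrableOn (fun x => |glim x i| ^ p i x) Ω)
    (huconv : Tendsto (fun j => ∫ x in Ω, |u j x - ulim x| ^ pM x) atTop (𝓝 0))
    (hgconv : ∀ i, Tendsto (fun j => ∫ x in Ω, |g j x i - glim x i| ^ p i x) atTop (𝓝 0)) :
    Tendsto (fun j => ∫ x in Ω, |f x (u j x) (g j x) - f x (ulim x) (glim x)| ^ q' x)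
      atTop (𝓝 0) := by
  have hΩm : MeasurableSet Ω := hΩo.measurableSet
  have : IsFiniteMeasure (volume.restrict Ω) := isFiniteMeasure_restrict.2 hΩb.measure_lt_top.ne
  have hΩ_ae : ∀ᵐ x ∂(volume.restrict Ω), x ∈ closure Ω :=
    (ae_restrict_mem hΩm).mono fun x hx => subset_closure hx
  have hqq' : ∀ x ∈ closure Ω, (q x).HolderConjugate (q' x) := fun x hx =>
    (Real.holderConjugate_iff_eq_conjExponent (hq1 x hx)).2 (hq' x)
  have hq'c : ContinuousOn q' (closure Ω) := funext hq' ▸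
    hqc.div (hqc.sub continuousOn_const) fun x hx => (hqq' x hx).sub_one_ne_zero
  obtain ⟨E, hE⟩ := hΩb.isCompact_closure.exists_forall_le_of_continuousOn
    (f := fun o : Option (Fin n) => o.elim q' p) (Option.forall.2 ⟨hq'c, hpc⟩)
  have hpME : ∀ x ∈ closure Ω, pM x ≤ E := fun x hx => hpM x ▸
    Real.iSup_le (fun i => hE (some i) x hx) ((hqq' x hx).symm.nonneg.trans (hE none x hx))
  have hp_meas : ∀ i, AEMeasurable (p i) (volume.restrict Ω) :=
    fun i => ((hpc i).mono subset_closure).aemeasurable hΩm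
  refine tendsto_integral_nemytskii (f := fun x sξ => f x sξ.1 sξ.2) (fun sξ => hfmeas sξ.1 sξ.2)
    hfcont hC.le ((hq'c.mono subset_closure).aemeasurable hΩm)
    (funext hpM ▸ AEMeasurable.iSup hp_meas) hp_meas (hΩ_ae.mono hqq')
    (hΩ_ae.mono (hE none)) ((ae_restrict_mem hΩm).mono hqpM) (hΩ_ae.mono hpME)
    (hΩ_ae.mono fun x hx i => ⟨(hp1 i x hx).le, hE (some i) x hx⟩)
    ((ae_restrict_mem hΩm).mono fun x hx i =>
      ⟨(zero_lt_one.trans (hr i x hx).1).le, (hr i x hx).2⟩)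
    hkint hgrowth hum hulm (fun j => measurable_pi_lambda _ (hgm j))
    (measurable_pi_lambda _ hglm) huint hulint hgint hglint huconv hgconv

/-- Continuity of the Nemytskii map associated to a Carathéodory function `f` with
anisotropic nonstandard growth: modular convergence of `u_k → u` and `g_k → g` implies
modular convergence (for the exponent `q'`) of `f(·, u_k(·), g_k(·)) → f(·, u(·), g(·))`. -/
theorem nemytskii_continuous
    {n : ℕ} (hn : 3 ≤ n) (Ω : Set (Fin n → ℝ)) (hΩo : IsOpen Ω)
    (hΩb : Bornology.IsBounded Ω) (hΩc : IsConnected Ω)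
    (p : Fin n → (Fin n → ℝ) → ℝ)
    (hpc : ∀ i, ContinuousOn (p i) (closure Ω))
    (hp1 : ∀ i, ∀ x ∈ closure Ω, 1 < p i x)
    (pM : (Fin n → ℝ) → ℝ) (hpM : ∀ x, pM x = ⨆ i, p i x)
    (f : (Fin n → ℝ) → ℝ → (Fin n → ℝ) → ℝ)
    (hfmeas : ∀ (s : ℝ) (ξ : Fin n → ℝ), Measurable (fun x => f x s ξ))
    (hfcont : ∀ᵐ x ∂(volume.restrict Ω),
      Continuous (fun sξ : ℝ × (Fin n → ℝ) => f x sξ.1 sξ.2))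
    (C : ℝ) (hC : 0 < C)
    (q : (Fin n → ℝ) → ℝ) (hqc : ContinuousOn q (closure Ω))
    (hq1 : ∀ x ∈ closure Ω, 1 < q x)
    (hqpM : ∀ x ∈ Ω, q x ≤ pM x)
    (q' : (Fin n → ℝ) → ℝ) (hq' : ∀ x, q' x = q x / (q x - 1))
    (k : (Fin n → ℝ) → ℝ) (hkm : Measurable k)
    (hkint : IntegrableOn (fun x => |k x| ^ q' x) Ω)
    (r : Fin n → (Fin n → ℝ) → ℝ)
    (hrm : ∀ i, Measurable (r i)) (hrnn : ∀ i x, 0 ≤ r i x)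
    (hr : ∀ i, ∀ x ∈ Ω, 1 < r i x * q' x ∧ r i x * q' x ≤ p i x)
    (hgrowth : ∀ᵐ x ∂(volume.restrict Ω), ∀ (s : ℝ) (ξ : Fin n → ℝ),
      |f x s ξ| ≤ C * (|k x| + |s| ^ (q x - 1) + ∑ i, |ξ i| ^ r i x))
    (u : ℕ → (Fin n → ℝ) → ℝ) (ulim : (Fin n → ℝ) → ℝ)
    (hum : ∀ j, Measurable (u j)) (hulm : Measurable ulim)
    (huint : ∀ j, IntegrableOn (fun x => |u j x| ^ pM x) Ω)
    (hulint : IntegrableOn (fun x => |ulim x| ^ pM x) Ω)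
    (g : ℕ → (Fin n → ℝ) → Fin n → ℝ) (glim : (Fin n → ℝ) → Fin n → ℝ)
    (hgm : ∀ j i, Measurable (fun x => g j x i)) (hglm : ∀ i, Measurable (fun x => glim x i))
    (hgint : ∀ j i, IntegrableOn (fun x => |g j x i| ^ p i x) Ω)
    (hglint : ∀ i, IntegrableOn (fun x => |glim x i| ^ p i x) Ω)
    (huconv : Tendsto (fun j => ∫ x in Ω, |u j x - ulim x| ^ pM x) atTop (𝓝 0))
    (hgconv : ∀ i, Tendsto (fun j => ∫ x in Ω, |g j x i - glim x i| ^ p i x) atTop (𝓝 0)) :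
    Tendsto (fun j => ∫ x in Ω, |f x (u j x) (g j x) - f x (ulim x) (glim x)| ^ q' x)
      atTop (𝓝 0) :=
  nemytskii_continuous_general Ω hΩo hΩb p hpc hp1 pM hpM f hfmeas hfcont C hC q hqc hq1 hqpM q' hq'
    k hkint r hr hgrowth u ulim hum hulm huint hulint g glim hgm hglm hgint hglint huconv hgconv
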